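/- arXiv:1809.08071 — 2 statements merged into one kernel-verified Lean document; each statement's English description precedes it below -/
import Mathlib

section
/- Let η, κ > 0, α_h = 6η/(12η+κ), and N_θ(y₁) = −(α_h/2)(κ/η)(|y₁| − 1/2)² + (α_h/8)(κ/η) − 1/2 on [-1/2, 1/2]. Then N_θ satisfies η N_θ'' = −κ α_h on (−1/2, 0) ∪ (0, 1/2), is continuous, periodic (N_θ(−1/2) = N_θ(1/2)), and ∫_{-1/2}^{1/2}(α_h + N_θ)dy₁ = 0. -/
/-!
Away from `0` the absolute value is locally `±y`, so `N_θ` is locally a quadratic with leading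
coefficient `-(α_h/2)(κ/η)`. `N_θ` is even, which gives periodicity. Since
`∫_{-1/2}^{1/2} (|y| - 1/2)² = 1/12`, the mean condition reduces to `α_h (1 + κ/(12η)) = 1/2`,
which is exactly the choice of `α_h`.
-/

open Filter Topology intervalIntegral

lemma deriv_deriv_mul_linear_sq_add (a s r b y : ℝ) :
    deriv (deriv fun x => a * (s * x - r) ^ 2 + b) y = 2 * a * s ^ 2 := by
  have hf : deriv (fun x => a * (s * x - r) ^ 2 + b) = fun x => 2 * a * s * (s * x - r) := by
    funext x
    have h : HasDerivAt (fun x => a * (s * x - r) ^ 2 + b) (2 * a * s * (s * x - r)) x :=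
      (((((hasDerivAt_id' x).const_mul s).sub_const r).pow 2).const_mul a |>.add_const b)
        |>.congr_deriv (by ring)
    exact h.deriv
  have h := (((hasDerivAt_id' y).const_mul s).sub_const r).const_mul (2 * a * s)
  rw [hf, h.deriv]
  ring

lemma abs_eventuallyEq_nhds_of_pos {y : ℝ} (hy : 0 < y) : (fun x : ℝ => |x|) =ᶠ[𝓝 y] fun x => x :=
  (eventually_gt_nhds hy).mono fun _ hx => abs_of_pos hx

lemma abs_eventuallyEq_nhds_of_neg {y : ℝ} (hy : y < 0) : (fun x : ℝ => |x|) =ᶠ[𝓝 y] fun x => -x :=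
  (eventually_lt_nhds hy).mono fun _ hx => abs_of_neg hx

lemma deriv_deriv_mul_abs_sub_sq_add (a r b : ℝ) {y : ℝ} (hy : y ≠ 0) :
    deriv (deriv fun x => a * (|x| - r) ^ 2 + b) y = 2 * a := by
  obtain ⟨s, hs, habs⟩ : ∃ s : ℝ, s ^ 2 = 1 ∧ (fun x : ℝ => |x|) =ᶠ[𝓝 y] fun x => s * x := by
    rcases hy.lt_or_gt with hneg | hpos
    · exact ⟨-1, by norm_num, by simpa using abs_eventuallyEq_nhds_of_neg hneg⟩
    · exact ⟨1, by norm_num, by simpa using abs_eventuallyEq_nhds_of_pos hpos⟩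
  have hf : (fun x => a * (|x| - r) ^ 2 + b) =ᶠ[𝓝 y] fun x => a * (s * x - r) ^ 2 + b :=
    habs.mono fun x hx => by simp only [hx]
  rw [hf.deriv.deriv_eq, deriv_deriv_mul_linear_sq_add, hs, mul_one]

lemma integral_abs_sub_sq {r : ℝ} (hr : 0 ≤ r) : ∫ y in -r..r, (|y| - r) ^ 2 = 2 * r ^ 3 / 3 := by
  have hcont : Continuous fun y : ℝ => (|y| - r) ^ 2 := by fun_prop
  have hleft : ∫ y in -r..0, (|y| - r) ^ 2 = r ^ 3 / 3 := by
    calc ∫ y in -r..0, (|y| - r) ^ 2 = ∫ y in -r..0, (y + r) ^ 2 := by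
          refine integral_congr fun y hy => ?_
          rw [Set.uIcc_of_le (by linarith)] at hy
          simp only [abs_of_nonpos hy.2]; ring
      _ = r ^ 3 / 3 := by
          rw [integral_comp_add_right (fun y => y ^ 2), integral_pow]; ring
  have hright : ∫ y in (0 : ℝ)..r, (|y| - r) ^ 2 = r ^ 3 / 3 := by
    calc ∫ y in (0 : ℝ)..r, (|y| - r) ^ 2 = ∫ y in (0 : ℝ)..r, (y - r) ^ 2 := by
          refine integral_congr fun y hy => ?_
          rw [Set.uIcc_of_le hr] at hy
          simp only [abs_of_nonneg hy.1]
      _ = r ^ 3 / 3 := by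
          rw [integral_comp_sub_right (fun y => y ^ 2), integral_pow]; ring
  rw [← integral_add_adjacent_intervals (hcont.intervalIntegrable _ _)
    (hcont.intervalIntegrable _ _), hleft, hright]
  ring

/-- The explicit corrector rotation
`N_θ(y) = −(α_h/2)(κ/η)(|y|−1/2)² + (α_h/8)(κ/η) − 1/2` with
`α_h = 6η/(12η+κ)` satisfies `η N_θ'' = −κα_h` away from the junction, is
continuous, periodic, and `∫_{-1/2}^{1/2}(α_h + N_θ) = 0`. -/
theorem stmt_16 (η κ : ℝ) (hη : 0 < η) (hκ : 0 < κ)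
    (αh : ℝ) (hαh : αh = 6 * η / (12 * η + κ))
    (Nθ : ℝ → ℝ)
    (hNθ : Nθ = fun y => -(αh / 2) * (κ / η) * (|y| - 1 / 2) ^ 2
        + (αh / 8) * (κ / η) - 1 / 2) :
    (∀ y ∈ Set.Ioo (-(1 / 2) : ℝ) 0 ∪ Set.Ioo (0 : ℝ) (1 / 2),
      η * deriv (deriv Nθ) y = -(κ * αh)) ∧
    Continuous Nθ ∧ Nθ (-(1 / 2)) = Nθ (1 / 2) ∧
    (∫ y in (-(1 / 2) : ℝ)..(1 / 2), (αh + Nθ y)) = 0 := by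
  have hN : Nθ = fun y => -(αh / 2) * (κ / η) * (|y| - 1 / 2) ^ 2
      + ((αh / 8) * (κ / η) - 1 / 2) := by
    rw [hNθ]; funext y; ring
  refine ⟨fun y hy => ?_, by rw [hN]; fun_prop, by simp only [hN, abs_neg], ?_⟩
  · have hy0 : y ≠ 0 := by
      rcases hy with hy | hy
      exacts [hy.2.ne, hy.1.ne']
    rw [hN, deriv_deriv_mul_abs_sub_sq_add _ _ _ hy0]
    field_simp
  · have hcont : Continuous fun y : ℝ => (|y| - 1 / 2) ^ 2 := by fun_prop
    have hsq : ∫ y in (-(1 / 2) : ℝ)..(1 / 2), (|y| - 1 / 2) ^ 2 = 1 / 12 := by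
      rw [integral_abs_sub_sq (by norm_num)]; norm_num
    rw [hN, integral_add intervalIntegrable_const
      (((hcont.intervalIntegrable _ _).const_mul _).add intervalIntegrable_const),
      integral_add ((hcont.intervalIntegrable _ _).const_mul _) intervalIntegrable_const,
      integral_const_mul, hsq, hαh]
    have hη0 : η ≠ 0 := hη.ne'
    have hden : 12 * η + κ ≠ 0 := by positivity
    simp only [integral_const, smul_eq_mul]
    field_simp
    ring
end

section
/- For the square periodic beam lattice with extensional stiffness γ, bending stiffness η, and shear stiffness κ (all positive), the homogenized elasticity tensor has components C^h_{1111} = C^h_{2222} = γ, C^h_{1122} = C^h_{1112} = C^h_{1222} = 0, and C^h_{1212} = 6ηκ/(12η+κ). In particular the homogenized energy density is γ(e₁₁)² + γ(e₂₂)² + (6ηκ/(12η+κ))(2e₁₂)² ... i.e. the quadratic form γ(∂₁u₁)(∂₁ũ₁) + γ(∂₂u₂)(∂₂ũ₂) + (6ηκ/(12η+κ))(∂₂u₁+∂₁u₂)(∂₂ũ₁+∂₁ũ₂). -/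
/-- A kinematically admissible periodic corrector on the unit cell graph of the
square lattice: the stiff part `Γ₁` is a cross made of a horizontal segment
(tangent `τ = (1,0)`, normal `n = (0,1)`) and a vertical segment
(tangent `τ = (0,1)`, normal `n = (−1,0)`), each parametrized by `[-1/2,1/2]`,
joined rigidly at the midpoint `0` and periodic at the endpoints `±1/2`. -/
structure CrossCorrector where
  uh : ℝ → ℝ
  vh : ℝ → ℝ
  th : ℝ → ℝ
  uv : ℝ → ℝ
  vv : ℝ → ℝ
  tv : ℝ → ℝ
  smooth_uh : ContDiff ℝ 1 uh
  smooth_vh : ContDiff ℝ 1 vh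
  smooth_th : ContDiff ℝ 1 th
  smooth_uv : ContDiff ℝ 1 uv
  smooth_vv : ContDiff ℝ 1 vv
  smooth_tv : ContDiff ℝ 1 tv
  per_uh : uh (-(1/2)) = uh (1/2)
  per_vh : vh (-(1/2)) = vh (1/2)
  per_th : th (-(1/2)) = th (1/2)
  per_uv : uv (-(1/2)) = uv (1/2)
  per_vv : vv (-(1/2)) = vv (1/2)
  per_tv : tv (-(1/2)) = tv (1/2)
  /-- continuity of the displacement at the joint: first component -/
  junc_disp1 : uh 0 = -(vv 0)
  /-- continuity of the displacement at the joint: second component -/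
  junc_disp2 : vh 0 = uv 0
  /-- continuity of the rotation at the joint -/
  junc_rot : th 0 = tv 0

/-- The cell energy of a corrector `N` for a macroscopic displacement
gradient `e`. -/
noncomputable def crossEnergy (γ η κ : ℝ) (e : Matrix (Fin 2) (Fin 2) ℝ)
    (N : CrossCorrector) : ℝ :=
  (∫ y in (-(1/2) : ℝ)..(1/2),
      (γ * (e 0 0 + deriv N.uh y) ^ 2 + η * (deriv N.th y) ^ 2
        + κ * (e 1 0 + deriv N.vh y - N.th y) ^ 2)) +
  ∫ y in (-(1/2) : ℝ)..(1/2),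
      (γ * (e 1 1 + deriv N.uv y) ^ 2 + η * (deriv N.tv y) ^ 2
        + κ * (-(e 0 1) + deriv N.vv y - N.tv y) ^ 2)

/-- The homogenized energy: the infimum of the cell energy over admissible
periodic correctors. -/
noncomputable def homEnergy (γ η κ : ℝ) (e : Matrix (Fin 2) (Fin 2) ℝ) : ℝ :=
  sInf {r : ℝ | ∃ N : CrossCorrector, r = crossEnergy γ η κ e N}

/-!
Each beam of the cross contributes `γ ∫ (a + u')² + η ∫ θ'² + κ ∫ (b + v' - θ)²`. Periodicity
kills the means of `u'` and `v'`, so by Jensen the first and last terms are at least `γ a²` and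
`κ (b - θ̄)²`, while a Poincaré inequality pinned at the joint gives `∫ θ'² ≥ 12 (θ̄ - θ(0))²`.
The two beams share only `θ(0)`, and minimising the resulting quadratic form in the two means
bounds the shear part below by `6ηκ/(12η+κ) (e₁₂ + e₂₁)²`.

Equality would need `θ = θ(0) ± c (|y| - y²)`, with opposite signs on the two beams and `v`
chosen to make the shear strain constant. This has a kink at the joint, so the infimum is not
attained; it is approached by the smoothings `√(y² + ε²) - ε - y²` of `|y| - y²` as `ε → 0`,
dominated convergence handling the bending term.
-/

open intervalIntegral Filter Topology

section IntegralInequalities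

variable {a b : ℝ} {f g : ℝ → ℝ}

theorem two_mul_integral_mul_sub_le (hab : a ≤ b) (hf : Continuous f) (hg : Continuous g)
    (c : ℝ) :
    2 * c * (∫ x in a..b, f x * g x) - c ^ 2 * ∫ x in a..b, g x ^ 2 ≤ ∫ x in a..b, f x ^ 2 := by
  have key : ∫ x in a..b, (2 * c * (f x * g x) - c ^ 2 * g x ^ 2) ≤ ∫ x in a..b, f x ^ 2 :=
    integral_mono_on hab (Continuous.intervalIntegrable (by fun_prop) _ _)
      (Continuous.intervalIntegrable (by fun_prop) _ _)
      fun x _ => by nlinarith [sq_nonneg (f x - c * g x)]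
  rwa [integral_sub (Continuous.intervalIntegrable (by fun_prop) _ _)
    (Continuous.intervalIntegrable (by fun_prop) _ _), integral_const_mul,
    integral_const_mul] at key

theorem sq_integral_le_mul_integral_sq (hab : a ≤ b) (hf : Continuous f) :
    (∫ x in a..b, f x) ^ 2 ≤ (b - a) * ∫ x in a..b, f x ^ 2 := by
  rcases hab.eq_or_lt with rfl | hlt
  · simp
  have hba : 0 < b - a := sub_pos.2 hlt
  have h := two_mul_integral_mul_sub_le hab hf (continuous_const (y := (1 : ℝ)))
    ((∫ x in a..b, f x) / (b - a))
  simp only [mul_one, one_pow, integral_const, smul_eq_mul] at h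
  have : (∫ x in a..b, f x) ^ 2 / (b - a) ≤ ∫ x in a..b, f x ^ 2 := by
    convert h using 1; field_simp; ring
  rwa [div_le_iff₀ hba, mul_comm] at this

theorem integral_neg_self_of_even {c : ℝ} (hf : Continuous f) (heven : ∀ x, f (-x) = f x) :
    ∫ x in -c..c, f x = 2 * ∫ x in (0 : ℝ)..c, f x := by
  have hleft : ∫ x in -c..0, f x = ∫ x in (0 : ℝ)..c, f x := by
    simpa [heven] using (integral_comp_neg (a := 0) (b := c) f).symm
  rw [← integral_add_adjacent_intervals (b := 0) (hf.intervalIntegrable _ _)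
    (hf.intervalIntegrable _ _), hleft]
  ring

end IntegralInequalities

noncomputable def cellMean (f : ℝ → ℝ) : ℝ := ∫ y in (-(1/2) : ℝ)..1/2, f y

section Poincare

variable {t : ℝ → ℝ}

theorem sq_integral_zero_half_sub_le (ht : ContDiff ℝ 1 t) :
    24 * ((∫ y in (0 : ℝ)..1/2, t y) - t 0 / 2) ^ 2 ≤ ∫ y in (0 : ℝ)..1/2, deriv t y ^ 2 := by
  have hdt : Continuous (deriv t) := ht.continuous_deriv le_rfl
  set D := (∫ y in (0 : ℝ)..1/2, t y) - t 0 / 2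
  have hparts : ∫ y in (0 : ℝ)..1/2, deriv t y * (1/2 - y) = D := by
    have h := integral_mul_deriv_eq_deriv_mul (a := 0) (b := 1/2) (u := fun y => 1/2 - y)
      (u' := fun _ => -1) (v := t) (v' := deriv t)
      (fun y _ => by simpa using (hasDerivAt_id y).const_sub (1/2 : ℝ))
      (fun y _ => (ht.differentiable one_ne_zero y).hasDerivAt)
      intervalIntegrable_const (hdt.intervalIntegrable _ _)
    simp only [neg_one_mul, integral_neg] at h
    simp only [D, mul_comm (deriv t _), h]
    ring
  have hweight : ∫ y in (0 : ℝ)..1/2, (1/2 - y) ^ 2 = 1/24 := by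
    norm_num [integral_comp_sub_left (fun y => y ^ 2), integral_pow]
  -- Cauchy–Schwarz against the weight `1/2 - y`, tested at the optimal multiple `24 * D`
  have h := two_mul_integral_mul_sub_le (a := 0) (b := 1/2) (by norm_num) hdt
    (g := fun y => 1/2 - y) (by fun_prop) (24 * D)
  rw [hparts, hweight] at h
  linarith

theorem sq_cellMean_sub_le (ht : ContDiff ℝ 1 t) :
    12 * (cellMean t - t 0) ^ 2 ≤
      ∫ y in (-(1/2) : ℝ)..1/2, deriv t y ^ 2 := by
  have hdt2 : Continuous fun y => deriv t y ^ 2 := (ht.continuous_deriv le_rfl).pow 2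
  have hright := sq_integral_zero_half_sub_le ht
  have hleft := sq_integral_zero_half_sub_le (t := fun y => t (-y)) (ht.comp contDiff_neg)
  simp only [deriv_comp_neg, neg_sq, neg_zero] at hleft
  rw [integral_comp_neg (fun y => t y), integral_comp_neg (fun y => deriv t y ^ 2)] at hleft
  rw [cellMean, ← integral_add_adjacent_intervals (b := 0) (ht.continuous.intervalIntegrable _ _)
      (ht.continuous.intervalIntegrable _ _),
    ← integral_add_adjacent_intervals (b := 0) (hdt2.intervalIntegrable _ _)
      (hdt2.intervalIntegrable _ _)]
  simp only [neg_zero] at hleft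
  nlinarith [sq_nonneg ((∫ y in (-(1/2) : ℝ)..0, t y) - ∫ y in (0 : ℝ)..1/2, t y)]

end Poincare

noncomputable def beamEnergy (γ η κ a b : ℝ) (u v t : ℝ → ℝ) : ℝ :=
  ∫ y in (-(1/2) : ℝ)..(1/2),
    (γ * (a + deriv u y) ^ 2 + η * (deriv t y) ^ 2 + κ * (b + deriv v y - t y) ^ 2)

theorem crossEnergy_eq_add (γ η κ : ℝ) (e : Matrix (Fin 2) (Fin 2) ℝ) (N : CrossCorrector) :
    crossEnergy γ η κ e N = beamEnergy γ η κ (e 0 0) (e 1 0) N.uh N.vh N.th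
      + beamEnergy γ η κ (e 1 1) (-(e 0 1)) N.uv N.vv N.tv := rfl

section Beam

variable {γ η κ a b : ℝ} {u v t : ℝ → ℝ}

theorem beamEnergy_eq (hu : ContDiff ℝ 1 u) (hv : ContDiff ℝ 1 v) (ht : ContDiff ℝ 1 t) :
    beamEnergy γ η κ a b u v t =
      γ * (∫ y in (-(1/2) : ℝ)..1/2, (a + deriv u y) ^ 2)
        + η * (∫ y in (-(1/2) : ℝ)..1/2, deriv t y ^ 2)
        + κ * ∫ y in (-(1/2) : ℝ)..1/2, (b + deriv v y - t y) ^ 2 := by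
  have hu' := hu.continuous_deriv le_rfl
  have hv' := hv.continuous_deriv le_rfl
  have ht' := ht.continuous_deriv le_rfl
  have htc := ht.continuous
  rw [beamEnergy, integral_add (Continuous.intervalIntegrable (by fun_prop) _ _)
      (Continuous.intervalIntegrable (by fun_prop) _ _),
    integral_add (Continuous.intervalIntegrable (by fun_prop) _ _)
      (Continuous.intervalIntegrable (by fun_prop) _ _),
    integral_const_mul, integral_const_mul, integral_const_mul]

theorem integral_deriv_of_periodic (hu : ContDiff ℝ 1 u) (hper : u (-(1/2)) = u (1/2)) :
    ∫ y in (-(1/2) : ℝ)..1/2, deriv u y = 0 := by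
  rw [integral_deriv_eq_sub (fun x _ => hu.differentiable one_ne_zero x)
    ((hu.continuous_deriv le_rfl).intervalIntegrable _ _), hper, sub_self]

theorem beamEnergy_ge (hγ : 0 ≤ γ) (hη : 0 ≤ η) (hκ : 0 ≤ κ) (hu : ContDiff ℝ 1 u)
    (hv : ContDiff ℝ 1 v) (ht : ContDiff ℝ 1 t) (hu_per : u (-(1/2)) = u (1/2))
    (hv_per : v (-(1/2)) = v (1/2)) :
    γ * a ^ 2 + η * (12 * (cellMean t - t 0) ^ 2) + κ * (b - cellMean t) ^ 2
      ≤ beamEnergy γ η κ a b u v t := by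
  have hu' := hu.continuous_deriv le_rfl
  have hv' := hv.continuous_deriv le_rfl
  have htc := ht.continuous
  have hstretch : (∫ y in (-(1/2) : ℝ)..1/2, (a + deriv u y)) = a := by
    rw [integral_add intervalIntegrable_const (hu'.intervalIntegrable _ _),
      integral_deriv_of_periodic hu hu_per]
    norm_num
  have hshear : (∫ y in (-(1/2) : ℝ)..1/2, (b + deriv v y - t y)) = b - cellMean t := by
    rw [integral_sub (Continuous.intervalIntegrable (by fun_prop) _ _)
        (htc.intervalIntegrable _ _),
      integral_add intervalIntegrable_const (hv'.intervalIntegrable _ _),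
      integral_deriv_of_periodic hv hv_per, cellMean]
    norm_num
  have h₁ := sq_integral_le_mul_integral_sq (a := -(1/2)) (b := 1/2) (by norm_num)
    (f := fun y => a + deriv u y) (by fun_prop)
  have h₂ := sq_integral_le_mul_integral_sq (a := -(1/2)) (b := 1/2) (by norm_num)
    (f := fun y => b + deriv v y - t y) (by fun_prop)
  have h₃ := sq_cellMean_sub_le ht
  rw [hstretch] at h₁
  rw [hshear] at h₂
  rw [beamEnergy_eq hu hv ht]
  norm_num at h₁ h₂
  gcongr

end Beam

theorem mul_sq_sub_le_beam_pair {η κ : ℝ} (hη : 0 < η) (hκ : 0 < κ) (p q x y : ℝ) :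
    6 * η * κ / (12 * η + κ) * (p - q) ^ 2
      ≤ η * (12 * x ^ 2) + κ * (p - x) ^ 2 + (η * (12 * y ^ 2) + κ * (q - y) ^ 2) := by
  rw [div_mul_eq_mul_div, div_le_iff₀ (by positivity)]
  nlinarith [sq_nonneg ((12 * η + κ) * x - κ * p), sq_nonneg ((12 * η + κ) * y - κ * q),
    mul_nonneg (mul_nonneg hη.le hκ.le) (sq_nonneg (p + q))]

theorem crossEnergy_ge {γ η κ : ℝ} (hγ : 0 ≤ γ) (hη : 0 < η) (hκ : 0 < κ)
    (e : Matrix (Fin 2) (Fin 2) ℝ) (N : CrossCorrector) :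
    γ * (e 0 0) ^ 2 + γ * (e 1 1) ^ 2 + 6 * η * κ / (12 * η + κ) * (e 0 1 + e 1 0) ^ 2
      ≤ crossEnergy γ η κ e N := by
  have hh := beamEnergy_ge (a := e 0 0) (b := e 1 0) hγ hη.le hκ.le N.smooth_uh N.smooth_vh
    N.smooth_th N.per_uh N.per_vh
  have hv := beamEnergy_ge (a := e 1 1) (b := -(e 0 1)) hγ hη.le hκ.le N.smooth_uv N.smooth_vv
    N.smooth_tv N.per_uv N.per_vv
  have hpair := mul_sq_sub_le_beam_pair hη hκ (e 1 0 - N.th 0) (-(e 0 1) - N.th 0)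
    (cellMean N.th - N.th 0) (cellMean N.tv - N.th 0)
  rw [← N.junc_rot] at hv
  rw [crossEnergy_eq_add]
  ring_nf at hh hv hpair ⊢
  linarith

noncomputable def shearFreeDeflection (t : ℝ → ℝ) (x : ℝ) : ℝ :=
  ∫ y in (0 : ℝ)..x, (t y - cellMean t)

section ShearFree

variable {t : ℝ → ℝ}

theorem hasDerivAt_shearFreeDeflection (ht : Continuous t) (x : ℝ) :
    HasDerivAt (shearFreeDeflection t) (t x - cellMean t) x :=
  ((ht.sub continuous_const).integral_hasStrictDerivAt 0 x).hasDerivAt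

theorem contDiff_shearFreeDeflection (ht : Continuous t) :
    ContDiff ℝ 1 (shearFreeDeflection t) := by
  rw [contDiff_one_iff_deriv]
  refine ⟨fun x => (hasDerivAt_shearFreeDeflection ht x).differentiableAt, ?_⟩
  rw [show deriv (shearFreeDeflection t) = fun x => t x - cellMean t from
    funext fun x => (hasDerivAt_shearFreeDeflection ht x).deriv]
  fun_prop

theorem shearFreeDeflection_zero : shearFreeDeflection t 0 = 0 :=
  integral_same

theorem shearFreeDeflection_periodic (ht : Continuous t) :
    shearFreeDeflection t (-(1/2)) = shearFreeDeflection t (1/2) := by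
  have hint : Continuous fun y => t y - cellMean t := by fun_prop
  have hzero : ∫ y in (-(1/2) : ℝ)..1/2, (t y - cellMean t) = 0 := by
    rw [integral_sub (ht.intervalIntegrable _ _) intervalIntegrable_const, integral_const]
    norm_num [cellMean]
  have h := integral_interval_sub_left (a := 0) (b := 1/2) (c := -(1/2))
    (hint.intervalIntegrable _ _) (hint.intervalIntegrable (μ := MeasureTheory.volume) _ _)
  rw [hzero, sub_eq_zero] at h
  exact h.symm

theorem beamEnergy_shearFree {γ η κ a b : ℝ} (ht : ContDiff ℝ 1 t) :
    beamEnergy γ η κ a b 0 (shearFreeDeflection t) t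
      = γ * a ^ 2 + η * (∫ y in (-(1/2) : ℝ)..1/2, deriv t y ^ 2)
        + κ * (b - cellMean t) ^ 2 := by
  rw [beamEnergy_eq (u := 0) contDiff_zero_fun (contDiff_shearFreeDeflection ht.continuous) ht]
  have hshear : ∀ y, b + deriv (shearFreeDeflection t) y - t y = b - cellMean t := fun y => by
    rw [(hasDerivAt_shearFreeDeflection ht.continuous y).deriv]; ring
  simp only [hshear, Pi.zero_def, deriv_const', add_zero, integral_const]
  norm_num

end ShearFree

noncomputable def shearFreeCorrector (th tv : ℝ → ℝ) (hth : ContDiff ℝ 1 th)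
    (htv : ContDiff ℝ 1 tv)
    (hth_per : th (-(1/2)) = th (1/2)) (htv_per : tv (-(1/2)) = tv (1/2))
    (hjunc : th 0 = tv 0) : CrossCorrector where
  uh := 0
  vh := shearFreeDeflection th
  th := th
  uv := 0
  vv := shearFreeDeflection tv
  tv := tv
  smooth_uh := contDiff_zero_fun
  smooth_vh := contDiff_shearFreeDeflection hth.continuous
  smooth_th := hth
  smooth_uv := contDiff_zero_fun
  smooth_vv := contDiff_shearFreeDeflection htv.continuous
  smooth_tv := htv
  per_uh := rfl
  per_vh := shearFreeDeflection_periodic hth.continuous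
  per_th := hth_per
  per_uv := rfl
  per_vv := shearFreeDeflection_periodic htv.continuous
  per_tv := htv_per
  junc_disp1 := by simp [shearFreeDeflection_zero]
  junc_disp2 := by simp [shearFreeDeflection_zero]
  junc_rot := hjunc

theorem crossEnergy_shearFreeCorrector {γ η κ : ℝ} (e : Matrix (Fin 2) (Fin 2) ℝ)
    {th tv : ℝ → ℝ} (hth : ContDiff ℝ 1 th) (htv : ContDiff ℝ 1 tv)
    (hth_per : th (-(1/2)) = th (1/2)) (htv_per : tv (-(1/2)) = tv (1/2))
    (hjunc : th 0 = tv 0) :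
    crossEnergy γ η κ e (shearFreeCorrector th tv hth htv hth_per htv_per hjunc)
      = γ * (e 0 0) ^ 2 + η * (∫ y in (-(1/2) : ℝ)..1/2, deriv th y ^ 2)
          + κ * (e 1 0 - cellMean th) ^ 2
        + (γ * (e 1 1) ^ 2 + η * (∫ y in (-(1/2) : ℝ)..1/2, deriv tv y ^ 2)
          + κ * (-(e 0 1) - cellMean tv) ^ 2) := by
  rw [crossEnergy_eq_add]
  exact congrArg₂ (· + ·) (beamEnergy_shearFree hth) (beamEnergy_shearFree htv)

section Profile

variable {g : ℝ → ℝ}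

theorem cellMean_const_add_mul (hg : Continuous g) (θ c : ℝ) :
    cellMean (fun y => θ + c * g y) = θ + c * cellMean g := by
  have hcg : Continuous fun y => c * g y := by fun_prop
  rw [cellMean, integral_add intervalIntegrable_const (hcg.intervalIntegrable _ _),
    integral_const_mul, integral_const]
  norm_num [cellMean]

theorem integral_deriv_const_add_mul_sq (θ c : ℝ) :
    ∫ y in (-(1/2) : ℝ)..1/2, deriv (fun y => θ + c * g y) y ^ 2
      = c ^ 2 * ∫ y in (-(1/2) : ℝ)..1/2, deriv g y ^ 2 := by
  simp only [deriv_const_add', deriv_const_mul_field', mul_pow, integral_const_mul]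

end Profile

noncomputable def kinkApprox (ε y : ℝ) : ℝ := √(y ^ 2 + ε ^ 2) - ε - y ^ 2

section KinkApprox

variable {ε y : ℝ}

theorem kinkApprox_zero (hε : 0 ≤ ε) : kinkApprox ε 0 = 0 := by
  simp [kinkApprox, Real.sqrt_sq hε]

theorem kinkApprox_neg (ε y : ℝ) : kinkApprox ε (-y) = kinkApprox ε y := by
  simp [kinkApprox]

theorem hasDerivAt_kinkApprox (hε : ε ≠ 0) (y : ℝ) :
    HasDerivAt (kinkApprox ε) (y / √(y ^ 2 + ε ^ 2) - 2 * y) y := by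
  have hpos : 0 < y ^ 2 + ε ^ 2 := by positivity
  have h := ((((hasDerivAt_pow 2 y).add_const (ε ^ 2)).sqrt hpos.ne').sub_const ε).sub
    (hasDerivAt_pow 2 y)
  refine h.congr_deriv ?_
  have : √(y ^ 2 + ε ^ 2) ≠ 0 := (Real.sqrt_pos.2 hpos).ne'
  field_simp
  norm_num

theorem contDiff_kinkApprox (hε : ε ≠ 0) : ContDiff ℝ 1 (kinkApprox ε) :=
  (((contDiff_id.pow 2).add contDiff_const).sqrt fun y => by positivity).sub contDiff_const
    |>.sub (contDiff_id.pow 2)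

theorem integral_zero_half_sub_sq : ∫ y in (0 : ℝ)..1/2, (y - y ^ 2) = 1/12 := by
  rw [integral_sub intervalIntegrable_id ((continuous_pow 2).intervalIntegrable _ _)]
  norm_num [integral_id, integral_pow]

theorem tendsto_cellMean_kinkApprox :
    Tendsto (fun ε => cellMean (kinkApprox ε)) (𝓝 0) (𝓝 (1/6)) := by
  have hcont : Continuous fun ε => cellMean (kinkApprox ε) :=
    continuous_parametric_intervalIntegral_of_continuous' (by unfold kinkApprox; fun_prop) _ _
  have hlim : cellMean (kinkApprox 0) = 1/6 := by
    rw [cellMean, integral_neg_self_of_even (by unfold kinkApprox; fun_prop) (kinkApprox_neg 0)]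
    rw [integral_congr (g := fun y => y - y ^ 2) fun y hy => by
      simp [kinkApprox, Real.sqrt_sq (Set.uIcc_of_le (by norm_num : (0 : ℝ) ≤ 1/2) ▸ hy).1],
      integral_zero_half_sub_sq]
    norm_num
  simpa [hlim] using hcont.tendsto 0

theorem integral_zero_half_one_sub_two_mul_sq : ∫ y in (0 : ℝ)..1/2, (1 - 2 * y) ^ 2 = 1/6 := by
  norm_num [integral_comp_sub_mul (fun x => x ^ 2), integral_pow]

theorem sq_div_sqrt_sub_two_mul_le_one (hy : y ∈ Set.Ioc (0 : ℝ) (1/2)) :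
    (y / √(y ^ 2 + ε ^ 2) - 2 * y) ^ 2 ≤ 1 := by
  have hsqrt : y ≤ √(y ^ 2 + ε ^ 2) := Real.le_sqrt_of_sq_le (by nlinarith)
  have hq₀ : 0 ≤ y / √(y ^ 2 + ε ^ 2) := div_nonneg hy.1.le (hy.1.le.trans hsqrt)
  have hq₁ : y / √(y ^ 2 + ε ^ 2) ≤ 1 := div_le_one_of_le₀ hsqrt (hy.1.le.trans hsqrt)
  nlinarith [hy.1, hy.2]

theorem tendsto_div_sqrt_sub_two_mul_sq (hy : 0 < y) :
    Tendsto (fun ε => (y / √(y ^ 2 + ε ^ 2) - 2 * y) ^ 2) (𝓝[>] 0) (𝓝 ((1 - 2 * y) ^ 2)) := by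
  have hne : ∀ ε : ℝ, √(y ^ 2 + ε ^ 2) ≠ 0 := fun ε => (Real.sqrt_pos.2 (by positivity)).ne'
  have hc : Continuous fun ε : ℝ => (y / √(y ^ 2 + ε ^ 2) - 2 * y) ^ 2 :=
    ((continuous_const.div (by fun_prop) hne).sub continuous_const).pow 2
  simpa [Real.sqrt_sq hy.le, hy.ne'] using (hc.tendsto 0).mono_left nhdsWithin_le_nhds

theorem tendsto_integral_deriv_kinkApprox_sq :
    Tendsto (fun ε => ∫ y in (-(1/2) : ℝ)..1/2, deriv (kinkApprox ε) y ^ 2) (𝓝[>] 0)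
      (𝓝 (1/3)) := by
  have heven : ∀ᶠ ε in 𝓝[>] (0 : ℝ), ∫ y in (-(1/2) : ℝ)..1/2, deriv (kinkApprox ε) y ^ 2
      = 2 * ∫ y in (0 : ℝ)..1/2, (y / √(y ^ 2 + ε ^ 2) - 2 * y) ^ 2 := by
    filter_upwards [self_mem_nhdsWithin] with ε (hε : 0 < ε)
    simp_rw [(hasDerivAt_kinkApprox hε.ne' _).deriv]
    have hne : ∀ y : ℝ, √(y ^ 2 + ε ^ 2) ≠ 0 := fun y => (Real.sqrt_pos.2 (by positivity)).ne'
    refine integral_neg_self_of_even ?_ fun y => ?_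
    · exact ((continuous_id.div (by fun_prop) hne).sub (by fun_prop)).pow 2
    · rw [neg_sq]; ring
  have hdom : Tendsto (fun ε => ∫ y in (0 : ℝ)..1/2, (y / √(y ^ 2 + ε ^ 2) - 2 * y) ^ 2)
      (𝓝[>] 0) (𝓝 (∫ y in (0 : ℝ)..1/2, (1 - 2 * y) ^ 2)) := by
    refine tendsto_integral_filter_of_dominated_convergence (fun _ => 1)
      (Eventually.of_forall fun ε => (by fun_prop : Measurable _).aestronglyMeasurable)
      (Eventually.of_forall fun ε => Eventually.of_forall fun y hy => ?_)
      intervalIntegrable_const (Eventually.of_forall fun y hy => ?_)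
    · rw [Set.uIoc_of_le (by norm_num)] at hy
      rw [Real.norm_eq_abs, abs_of_nonneg (sq_nonneg _)]
      exact sq_div_sqrt_sub_two_mul_le_one hy
    · rw [Set.uIoc_of_le (by norm_num)] at hy
      exact tendsto_div_sqrt_sub_two_mul_sq hy.1
  rw [integral_zero_half_one_sub_two_mul_sq] at hdom
  refine Tendsto.congr' (EventuallyEq.symm heven) ?_
  convert hdom.const_mul 2 using 2
  norm_num

end KinkApprox

section HomEnergy

variable {γ η κ : ℝ}

theorem le_homEnergy (hγ : 0 ≤ γ) (hη : 0 < η) (hκ : 0 < κ) (e : Matrix (Fin 2) (Fin 2) ℝ) :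
    γ * (e 0 0) ^ 2 + γ * (e 1 1) ^ 2 + 6 * η * κ / (12 * η + κ) * (e 0 1 + e 1 0) ^ 2
      ≤ homEnergy γ η κ e :=
  le_csInf ⟨_, shearFreeCorrector 0 0 contDiff_zero_fun contDiff_zero_fun rfl rfl rfl, rfl⟩
    (by rintro _ ⟨N, rfl⟩; exact crossEnergy_ge hγ hη hκ e N)

theorem homEnergy_le_crossEnergy (hγ : 0 ≤ γ) (hη : 0 < η) (hκ : 0 < κ)
    (e : Matrix (Fin 2) (Fin 2) ℝ) (N : CrossCorrector) :
    homEnergy γ η κ e ≤ crossEnergy γ η κ e N :=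
  csInf_le ⟨_, by rintro _ ⟨N', rfl⟩; exact crossEnergy_ge hγ hη hκ e N'⟩ ⟨N, rfl⟩

theorem homEnergy_le_of_profile (hγ : 0 ≤ γ) (hη : 0 < η) (hκ : 0 < κ)
    (e : Matrix (Fin 2) (Fin 2) ℝ) {g : ℝ → ℝ} (hg : ContDiff ℝ 1 g) (hg_zero : g 0 = 0)
    (hg_per : g (-(1/2)) = g (1/2)) (θ c : ℝ) :
    homEnergy γ η κ e ≤ γ * (e 0 0) ^ 2 + γ * (e 1 1) ^ 2
      + 2 * η * c ^ 2 * (∫ y in (-(1/2) : ℝ)..1/2, deriv g y ^ 2)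
      + κ * ((e 1 0 - θ - c * cellMean g) ^ 2 + (e 0 1 + θ - c * cellMean g) ^ 2) := by
  have hprofile : ∀ c' : ℝ, ContDiff ℝ 1 fun y => θ + c' * g y :=
    fun c' => contDiff_const.add (contDiff_const.mul hg)
  have h := homEnergy_le_crossEnergy hγ hη hκ e
    (shearFreeCorrector _ _ (hprofile c) (hprofile (-c)) (by rw [hg_per]) (by rw [hg_per])
      (by simp [hg_zero]))
  rw [crossEnergy_shearFreeCorrector, integral_deriv_const_add_mul_sq,
    integral_deriv_const_add_mul_sq, cellMean_const_add_mul hg.continuous,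
    cellMean_const_add_mul hg.continuous] at h
  linarith

theorem homEnergy_le (hγ : 0 ≤ γ) (hη : 0 < η) (hκ : 0 < κ) (e : Matrix (Fin 2) (Fin 2) ℝ) :
    homEnergy γ η κ e ≤
      γ * (e 0 0) ^ 2 + γ * (e 1 1) ^ 2 + 6 * η * κ / (12 * η + κ) * (e 0 1 + e 1 0) ^ 2 := by
  set θ := (e 1 0 - e 0 1) / 2
  -- the amplitude minimising `bound (1/6) (1/3)` below
  set c := 3 * κ * (e 0 1 + e 1 0) / (12 * η + κ)
  set bound : ℝ → ℝ → ℝ := fun I J => γ * (e 0 0) ^ 2 + γ * (e 1 1) ^ 2 + 2 * η * c ^ 2 * J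
    + κ * ((e 1 0 - θ - c * I) ^ 2 + (e 0 1 + θ - c * I) ^ 2)
  have hle : ∀ ε > 0, homEnergy γ η κ e ≤
      bound (cellMean (kinkApprox ε)) (∫ y in (-(1/2) : ℝ)..1/2, deriv (kinkApprox ε) y ^ 2) :=
    fun ε hε => homEnergy_le_of_profile hγ hη hκ e (contDiff_kinkApprox hε.ne')
      (kinkApprox_zero hε.le) (kinkApprox_neg ε _) θ c
  have hlim := ((by fun_prop : Continuous (Function.uncurry bound)).tendsto (1/6, 1/3)).comp
    ((tendsto_cellMean_kinkApprox.mono_left nhdsWithin_le_nhds).prodMk_nhds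
      tendsto_integral_deriv_kinkApprox_sq)
  have hvalue : bound (1/6) (1/3) =
      γ * (e 0 0) ^ 2 + γ * (e 1 1) ^ 2 + 6 * η * κ / (12 * η + κ) * (e 0 1 + e 1 0) ^ 2 := by
    simp only [bound, θ, c]
    field_simp
    ring
  rw [← hvalue]
  exact ge_of_tendsto hlim (eventually_nhdsWithin_of_forall hle)

end HomEnergy

def squareLatticeTensor (γ μ : ℝ) (j l p q : Fin 2) : ℝ :=
  if j = l ∧ p = q ∧ j = p then γ else if j ≠ l ∧ p ≠ q then μ else 0

theorem squareLatticeTensor_quadForm (γ μ : ℝ) (e : Matrix (Fin 2) (Fin 2) ℝ) :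
    ∑ j, ∑ l, ∑ p, ∑ q, squareLatticeTensor γ μ j l p q * e j l * e p q
      = γ * (e 0 0) ^ 2 + γ * (e 1 1) ^ 2 + μ * (e 0 1 + e 1 0) ^ 2 := by
  simp only [Fin.sum_univ_two, squareLatticeTensor]
  norm_num
  ring

open Finset in
/-- For the square periodic beam lattice the homogenized elasticity tensor has
`C^h_{1111} = C^h_{2222} = γ`, `C^h_{1122} = C^h_{1112} = C^h_{1222} = 0` and
`C^h_{1212} = 6ηκ/(12η+κ)`; the homogenized energy density is
`γ e₁₁² + γ e₂₂² + (6ηκ/(12η+κ))(e₁₂+e₂₁)²`. -/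
theorem stmt_17 (γ η κ : ℝ) (hγ : 0 < γ) (hη : 0 < η) (hκ : 0 < κ) :
    ∃ C : Fin 2 → Fin 2 → Fin 2 → Fin 2 → ℝ,
      (∀ j l p q, C j l p q = C p q j l) ∧
      (∀ j l p q, C j l p q = C l j p q) ∧
      (∀ e : Matrix (Fin 2) (Fin 2) ℝ,
        homEnergy γ η κ e = ∑ j, ∑ l, ∑ p, ∑ q, C j l p q * e j l * e p q) ∧
      C 0 0 0 0 = γ ∧ C 1 1 1 1 = γ ∧
      C 0 0 1 1 = 0 ∧ C 0 0 0 1 = 0 ∧ C 0 1 1 1 = 0 ∧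
      C 0 1 0 1 = 6 * η * κ / (12 * η + κ) ∧
      (∀ e : Matrix (Fin 2) (Fin 2) ℝ,
        homEnergy γ η κ e = γ * (e 0 0) ^ 2 + γ * (e 1 1) ^ 2
          + (6 * η * κ / (12 * η + κ)) * (e 0 1 + e 1 0) ^ 2) := by
  have homEnergy_eq : ∀ e : Matrix (Fin 2) (Fin 2) ℝ, homEnergy γ η κ e
      = γ * (e 0 0) ^ 2 + γ * (e 1 1) ^ 2 + 6 * η * κ / (12 * η + κ) * (e 0 1 + e 1 0) ^ 2 :=
    fun e => (homEnergy_le hγ.le hη hκ e).antisymm (le_homEnergy hγ.le hη hκ e)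
  refine ⟨squareLatticeTensor γ (6 * η * κ / (12 * η + κ)), ?_, ?_,
    fun e => (homEnergy_eq e).trans (squareLatticeTensor_quadForm _ _ e).symm,
    by simp [squareLatticeTensor], by simp [squareLatticeTensor], by simp [squareLatticeTensor],
    by simp [squareLatticeTensor], by simp [squareLatticeTensor], by simp [squareLatticeTensor],
    homEnergy_eq⟩ <;>
  · intro j l p q
    fin_cases j <;> fin_cases l <;> fin_cases p <;> fin_cases q <;> simp [squareLatticeTensor]
end
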